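/- Let (M,i) be an image-finite pointed modal transition system over a finite event set Act such that (M,i) ⊨ᵃ ψ for every formula ψ ∈ Φ. Then for every Hennessy–Milner logic formula φ, (M,i) ⊨ᶜ φ implies (M,i) ⊨ᵃ φ. -/

import Mathlib

/-- A mixed transition system over event set `Act` with state set `σ`:
two transition relations `Ra` (asserted/must) and `Rc` (consistent/may). -/
structure MTS (Act σ : Type) where
  Ra : σ → Act → σ → Prop
  Rc : σ → Act → σ → Prop

namespace MTS

/-- `M` is a modal transition system iff `Ra ⊆ Rc`. -/
def IsModal {Act σ : Type} (M : MTS Act σ) : Prop :=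
  ∀ s α t, M.Ra s α t → M.Rc s α t

/-- `M` is image-finite. -/
def ImageFinite {Act σ : Type} (M : MTS Act σ) : Prop :=
  ∀ (s : σ) (α : Act), {t | M.Ra s α t}.Finite ∧ {t | M.Rc s α t}.Finite

end MTS

/-- A labelled transition system viewed as a mixed transition system `(Σ, R, R)`. -/
def LTS {Act σ : Type} (R : σ → Act → σ → Prop) : MTS Act σ := ⟨R, R⟩

/-- `Q` is a refinement from `M` to `N`. -/
def IsRefinement {Act σ τ : Type} (M : MTS Act σ) (N : MTS Act τ) (Q : σ → τ → Prop) : Prop :=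
  ∀ s t, Q s t → ∀ α : Act,
    (∀ s', M.Ra s α s' → ∃ t', N.Ra t α t' ∧ Q s' t') ∧
    (∀ t', N.Rc t α t' → ∃ s', M.Rc s α s' ∧ Q s' t')

/-- `(M,i) ⪯ (N,j)`: the pointed system `(N,j)` refines `(M,i)`. -/
def Refines {Act σ τ : Type} (M : MTS Act σ) (i : σ) (N : MTS Act τ) (j : τ) : Prop :=
  ∃ Q, IsRefinement M N Q ∧ Q i j

/-- Modes for the two judgments of the semantics: `a` (asserted), `c` (consistent). -/
inductive RMode where
  | a | c

/-- The dual mode: `¬a = c` and `¬c = a`. -/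
def RMode.negm : RMode → RMode
  | .a => .c
  | .c => .a

/-- The transition relation of mode `m`. -/
def MTS.R {Act σ : Type} (M : MTS Act σ) : RMode → σ → Act → σ → Prop
  | .a => M.Ra
  | .c => M.Rc

/-- Formulas of Hennessy–Milner logic over `Act`. -/
inductive HML (Act : Type) where
  | tt
  | neg (φ : HML Act)
  | dia (α : Act) (φ : HML Act)
  | and (φ ψ : HML Act)

/-- Larsen's semantics of Hennessy–Milner logic with two judgments `⊨ᵃ`, `⊨ᶜ`. -/
def Sat {Act σ : Type} (M : MTS Act σ) : HML Act → RMode → σ → Prop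
  | .tt, _, _ => True
  | .neg φ, m, s => ¬ Sat M φ m.negm s
  | .dia α φ, m, s => ∃ s', M.R m s α s' ∧ Sat M φ m s'
  | .and φ ψ, m, s => Sat M φ m s ∧ Sat M ψ m s

namespace HML

/-- `[α]φ = ¬⟨α⟩¬φ`. -/
def box {Act : Type} (α : Act) (φ : HML Act) : HML Act := .neg (.dia α (.neg φ))

/-- `φ ∨ ψ = ¬(¬φ ∧ ¬ψ)`. -/
def orf {Act : Type} (φ ψ : HML Act) : HML Act := .neg (.and (.neg φ) (.neg ψ))

/-- Finite conjunction (empty conjunction is `tt`). -/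
def bigAnd {Act : Type} : List (HML Act) → HML Act
  | [] => .tt
  | φ :: l => .and φ (bigAnd l)

/-- Finite disjunction (empty disjunction is `¬tt`). -/
def bigOr {Act : Type} : List (HML Act) → HML Act
  | [] => .neg .tt
  | φ :: l => orf φ (bigOr l)

/-- Modal depth of an HML formula. -/
def depth {Act : Type} : HML Act → ℕ
  | .tt => 0
  | .neg φ => φ.depth
  | .dia _ φ => 1 + φ.depth
  | .and φ ψ => max φ.depth ψ.depth

end HML

/-- Terms of the process algebra MPA. -/
inductive MPA (Act : Type) where
  | zero
  | bot
  | prefMust (α : Act) (p : MPA Act)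
  | prefMay (α : Act) (p : MPA Act)
  | plus (p q : MPA Act)

namespace MPA

variable {Act : Type} [DecidableEq Act]

/-- Must-successors of an MPA term for event `β` (structural operational semantics). -/
def must : MPA Act → Act → List (MPA Act)
  | .zero, _ => []
  | .bot, _ => []
  | .prefMust α p, β => if β = α then [p] else []
  | .prefMay _ _, _ => []
  | .plus p q, β => p.must β ++ q.must β

/-- All (must or may) successors of an MPA term for event `β`. -/
def may : MPA Act → Act → List (MPA Act)
  | .zero, _ => []
  | .bot, _ => [.bot]
  | .prefMust α p, β => if β = α then [p] else []
  | .prefMay α p, β => if β = α then [p] else []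
  | .plus p q, β => p.may β ++ q.may β

/-- The modal transition system `⟦·⟧` given by the structural operational semantics of MPA:
`Ra` is the set of must-transitions, `Rc` the set of all transitions. -/
def mts : MTS Act (MPA Act) :=
  ⟨fun p α q => q ∈ p.must α, fun p α q => q ∈ p.may α⟩

theorem sizeOf_lt_of_mem_must :
    ∀ (t : MPA Act) (α : Act) (r : MPA Act), r ∈ t.must α → sizeOf r < sizeOf t := by
  intro t
  induction t with
  | zero => intro α r h; simp [must] at h
  | bot => intro α r h; simp [must] at h
  | prefMust β p ih =>
      intro α r h
      simp only [must] at h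
      split at h <;> simp_all
  | prefMay β p ih => intro α r h; simp [must] at h
  | plus p q ihp ihq =>
      intro α r h
      simp only [must, List.mem_append] at h
      rcases h with h | h
      · have := ihp α r h; simp; omega
      · have := ihq α r h; simp; omega

theorem sizeOf_le_of_mem_may :
    ∀ (t : MPA Act) (α : Act) (r : MPA Act), r ∈ t.may α → sizeOf r ≤ sizeOf t := by
  intro t
  induction t with
  | zero => intro α r h; simp [may] at h
  | bot => intro α r h; simp [may] at h; simp [h]
  | prefMust β p ih =>
      intro α r h
      simp only [may] at h
      split at h <;> simp_all
  | prefMay β p ih =>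
      intro α r h
      simp only [may] at h
      split at h <;> simp_all
  | plus p q ihp ihq =>
      intro α r h
      simp only [may, List.mem_append] at h
      rcases h with h | h
      · have := ihp α r h; simp; omega
      · have := ihq α r h; simp; omega

theorem sizeOf_lt_plus_of_mem_may (p q : MPA Act) (α : Act) (r : MPA Act)
    (h : r ∈ (MPA.plus p q).may α) : sizeOf r < sizeOf (MPA.plus p q) := by
  simp only [may, List.mem_append] at h
  rcases h with h | h
  · have := sizeOf_le_of_mem_may p α r h; simp; omega
  · have := sizeOf_le_of_mem_may q α r h; simp; omega

end MPA

/-- The characteristic Hennessy–Milner formula `φ_p` of an MPA term `p`. -/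
noncomputable def charForm {Act : Type} [Fintype Act] [DecidableEq Act] : MPA Act → HML Act
  | .zero =>
      .bigAnd (((Finset.univ : Finset Act).toList).map fun α => .neg (.dia α .tt))
  | .bot => .tt
  | .prefMust α p =>
      .and (.dia α (charForm p)) (.and (HML.box α (charForm p))
        (.bigAnd ((((Finset.univ : Finset Act).toList).filter (fun β => β ≠ α)).map
          fun β => .neg (.dia β .tt))))
  | .prefMay α p =>
      .and (HML.box α (charForm p))
        (.bigAnd ((((Finset.univ : Finset Act).toList).filter (fun β => β ≠ α)).map
          fun β => .neg (.dia β .tt)))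
  | .plus p q =>
      .and
        (.bigAnd (((Finset.univ : Finset Act).toList).flatMap fun α =>
          ((MPA.plus p q).must α).attach.map fun r => HML.dia α (charForm r.1)))
        (.bigAnd (((Finset.univ : Finset Act).toList).map fun α =>
          HML.box α (.bigOr (((MPA.plus p q).may α).attach.map fun r => charForm r.1))))
decreasing_by
  all_goals first
    | exact MPA.sizeOf_lt_of_mem_must _ _ _ r.2
    | exact MPA.sizeOf_lt_plus_of_mem_may _ _ _ _ r.2
    | (simp; omega)
    | simp

/-- The formula `ψ_{w,α,p} = [δ₁]…[δₙ](⟨α⟩φ_p ∨ ¬⟨α⟩φ_p)`; the set `Φ` consists of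
all such formulas. -/
noncomputable def psiForm {Act : Type} [Fintype Act] [DecidableEq Act]
    (w : List Act) (α : Act) (p : MPA Act) : HML Act :=
  w.foldr (fun δ φ => HML.box δ φ)
    (HML.orf (.dia α (charForm p)) (.neg (.dia α (charForm p))))

/-- `Rᶜ`-reachability in a mixed transition system. -/
def MTS.ReachC {Act σ : Type} (M : MTS Act σ) : σ → σ → Prop :=
  Relation.ReflTransGen (fun s t => ∃ α, M.Rc s α t)

/-!
Say that `u` refines `t` up to depth `n` if for `n` rounds every must-step of `t` is matched by one
of `u` and every may-step of `u` by one of `t`; then `t ⊨ᵃ φ → u ⊨ᵃ φ` and `u ⊨ᶜ φ → t ⊨ᶜ φ` for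
all `φ` of depth `≤ n`. For image-finite `M`, unfolding `t` for `n` steps gives an MPA term `p`
with `t ⊨ᶜ φ_p`, and every `u ⊨ᵃ φ_p` refines `t` up to depth `n`.

Induct on `φ` over the states `t` that are `Rᶜ`-reachable from `i`. If `t ⊨ᶜ ⟨α⟩φ` through `s'`,
let `p` unfold `s'` to the depth of `φ`; then `t ⊨ᶜ ⟨α⟩φ_p`, and `ψ_{w,α,p}` for a word `w`
leading from `i` to `t` upgrades this to `t ⊨ᵃ ⟨α⟩φ_p`. The resulting must-successor `u ⊨ᵃ φ_p`
refines `s'`, so it inherits `s' ⊨ᵃ φ`, which holds by induction.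
-/

section Semantics

variable {Act σ : Type} (M : MTS Act σ)

@[simp]
theorem RMode.negm_negm (m : RMode) : m.negm.negm = m := by cases m <;> rfl

theorem sat_orf (φ ψ : HML Act) (m : RMode) (s : σ) :
    Sat M (HML.orf φ ψ) m s ↔ Sat M φ m s ∨ Sat M ψ m s := by
  simp only [HML.orf, Sat, RMode.negm_negm]
  tauto

theorem sat_box (α : Act) (φ : HML Act) (m : RMode) (s : σ) :
    Sat M (HML.box α φ) m s ↔ ∀ t, M.R m.negm s α t → Sat M φ m t := by
  simp [HML.box, Sat]

theorem sat_bigAnd (l : List (HML Act)) (m : RMode) (s : σ) :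
    Sat M (HML.bigAnd l) m s ↔ ∀ φ ∈ l, Sat M φ m s := by
  induction l with
  | nil => simp [HML.bigAnd, Sat]
  | cons φ l ih => simp [HML.bigAnd, Sat, ih]

theorem sat_bigOr (l : List (HML Act)) (m : RMode) (s : σ) :
    Sat M (HML.bigOr l) m s ↔ ∃ φ ∈ l, Sat M φ m s := by
  induction l with
  | nil => simp [HML.bigOr, Sat]
  | cons φ l ih => simp [HML.bigOr, sat_orf, ih]

theorem MTS.ReachC.exists_boxes {s t : σ} (hst : M.ReachC s t) :
    ∃ w : List Act, ∀ φ, Sat M (w.foldr HML.box φ) .a s → Sat M φ .a t := by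
  induction hst with
  | refl => exact ⟨[], fun _ => id⟩
  | tail _ htu ih =>
    obtain ⟨α, htu⟩ := htu
    obtain ⟨w, hw⟩ := ih
    refine ⟨w ++ [α], fun φ hφ => ?_⟩
    rw [List.foldr_append] at hφ
    exact (sat_box M α φ .a _).1 (hw _ hφ) _ htu

end Semantics

namespace MTS

variable {Act σ τ : Type}

def RefinesUpTo (M : MTS Act σ) (N : MTS Act τ) : ℕ → σ → τ → Prop
  | 0, _, _ => True
  | n + 1, s, t => ∀ α : Act,
      (∀ s', M.Ra s α s' → ∃ t', N.Ra t α t' ∧ RefinesUpTo M N n s' t') ∧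
      (∀ t', N.Rc t α t' → ∃ s', M.Rc s α s' ∧ RefinesUpTo M N n s' t')

theorem RefinesUpTo.sat {M : MTS Act σ} {N : MTS Act τ} (φ : HML Act) :
    ∀ {n : ℕ} {s : σ} {t : τ}, M.RefinesUpTo N n s t → φ.depth ≤ n →
      (Sat M φ .a s → Sat N φ .a t) ∧ (Sat N φ .c t → Sat M φ .c s) := by
  induction φ with
  | tt => exact fun _ _ => ⟨id, id⟩
  | neg φ ih =>
    intro n s t hst hd
    obtain ⟨ha, hc⟩ := ih hst hd
    exact ⟨fun hs ht => hs (hc ht), fun ht hs => ht (ha hs)⟩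
  | dia α φ ih =>
    rintro (_ | n) s t hst hd
    · simp [HML.depth] at hd
    have hd' : φ.depth ≤ n := by simp only [HML.depth] at hd; omega
    refine ⟨fun ⟨s', hs', hφ⟩ => ?_, fun ⟨t', ht', hφ⟩ => ?_⟩
    · obtain ⟨t', ht', hst'⟩ := (hst α).1 s' hs'
      exact ⟨t', ht', (ih hst' hd').1 hφ⟩
    · obtain ⟨s', hs', hst'⟩ := (hst α).2 t' ht'
      exact ⟨s', hs', (ih hst' hd').2 hφ⟩
  | and φ ψ ihφ ihψ =>
    intro n s t hst hd
    rw [HML.depth, max_le_iff] at hd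
    obtain ⟨hφa, hφc⟩ := ihφ hst hd.1
    obtain ⟨hψa, hψc⟩ := ihψ hst hd.2
    exact ⟨fun h => ⟨hφa h.1, hψa h.2⟩, fun h => ⟨hφc h.1, hψc h.2⟩⟩

end MTS

namespace MPA

variable {Act : Type} [DecidableEq Act]

def sum : List (MPA Act) → MPA Act :=
  List.foldr .plus .zero

@[simp]
theorem mem_must_prefMust {α β : Act} {p r : MPA Act} :
    r ∈ (prefMust α p).must β ↔ β = α ∧ r = p := by
  simp [must]

@[simp]
theorem mem_may_prefMust {α β : Act} {p r : MPA Act} :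
    r ∈ (prefMust α p).may β ↔ β = α ∧ r = p := by
  simp [may]

@[simp]
theorem mem_may_prefMay {α β : Act} {p r : MPA Act} :
    r ∈ (prefMay α p).may β ↔ β = α ∧ r = p := by
  simp [may]

@[simp]
theorem must_prefMay (α β : Act) (p : MPA Act) : (prefMay α p).must β = [] := rfl

@[simp]
theorem mem_must_sum {l : List (MPA Act)} {β : Act} {r : MPA Act} :
    r ∈ (sum l).must β ↔ ∃ x ∈ l, r ∈ x.must β := by
  induction l with
  | nil => simp [sum, must]
  | cons x l ih => simp [sum, must, ← ih]

@[simp]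
theorem mem_may_sum {l : List (MPA Act)} {β : Act} {r : MPA Act} :
    r ∈ (sum l).may β ↔ ∃ x ∈ l, r ∈ x.may β := by
  induction l with
  | nil => simp [sum, may]
  | cons x l ih => simp [sum, may, ← ih]

end MPA

section CharForm

variable {Act σ : Type} [Fintype Act] [DecidableEq Act] (M : MTS Act σ)

theorem sat_charForm_plus (p q : MPA Act) (m : RMode) (s : σ) :
    Sat M (charForm (.plus p q)) m s ↔
      (∀ α, ∀ r ∈ (MPA.plus p q).must α, ∃ s', M.R m s α s' ∧ Sat M (charForm r) m s') ∧
      (∀ α s', M.R m.negm s α s' → ∃ r ∈ (MPA.plus p q).may α, Sat M (charForm r) m s') := by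
  rw [charForm]
  simp only [Sat, sat_bigAnd]
  simp only [List.forall_mem_flatMap, List.forall_mem_map, Finset.mem_toList, Finset.mem_univ,
    forall_const, List.mem_attach, Subtype.forall, sat_box, sat_bigOr, Sat]
  simp only [List.mem_map, List.mem_attach, true_and, Subtype.exists, exists_prop,
    exists_exists_and_eq_and]

end CharForm

namespace MTS

variable {Act σ : Type} [Fintype Act] [DecidableEq Act] (M : MTS Act σ)

/-- The leading `0 +` makes the term a sum even when `t` has no successors, so that `charForm`
always unfolds through its `plus` clause. -/
noncomputable def approx (hMf : M.ImageFinite) : ℕ → σ → MPA Act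
  | 0, _ => .bot
  | n + 1, t => .plus .zero (MPA.sum ((Finset.univ : Finset Act).toList.flatMap fun α =>
      ((hMf t α).1.toFinset.toList.map fun t' => .prefMust α (approx hMf n t')) ++
      ((hMf t α).2.toFinset.toList.map fun t' => .prefMay α (approx hMf n t'))))

theorem mem_must_approx_succ (hMf : M.ImageFinite) {n : ℕ} {t : σ} {β : Act} {r : MPA Act} :
    r ∈ (M.approx hMf (n + 1) t).must β ↔ ∃ t', M.Ra t β t' ∧ r = M.approx hMf n t' := by
  simp only [approx, MPA.must, List.nil_append, MPA.mem_must_sum, List.mem_flatMap,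
    Finset.mem_toList, Finset.mem_univ, List.mem_append, List.mem_map, Set.Finite.mem_toFinset,
    Set.mem_ofPred_eq, true_and]
  aesop

theorem mem_may_approx_succ (hM : M.IsModal) (hMf : M.ImageFinite) {n : ℕ} {t : σ} {β : Act}
    {r : MPA Act} :
    r ∈ (M.approx hMf (n + 1) t).may β ↔ ∃ t', M.Rc t β t' ∧ r = M.approx hMf n t' := by
  simp only [approx, MPA.may, List.nil_append, MPA.mem_may_sum, List.mem_flatMap,
    Finset.mem_toList, Finset.mem_univ, List.mem_append, List.mem_map, Set.Finite.mem_toFinset,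
    Set.mem_ofPred_eq, true_and]
  aesop

theorem sat_charForm_approx_succ (hM : M.IsModal) (hMf : M.ImageFinite) (n : ℕ) (t : σ)
    (m : RMode) (s : σ) :
    Sat M (charForm (M.approx hMf (n + 1) t)) m s ↔
      (∀ α t', M.Ra t α t' → ∃ s', M.R m s α s' ∧ Sat M (charForm (M.approx hMf n t')) m s') ∧
      (∀ α s', M.R m.negm s α s' →
        ∃ t', M.Rc t α t' ∧ Sat M (charForm (M.approx hMf n t')) m s') := by
  rw [approx, sat_charForm_plus, ← approx]
  simp only [M.mem_must_approx_succ, M.mem_may_approx_succ hM]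
  constructor
  · rintro ⟨hmust, hmay⟩
    refine ⟨fun α t' ht' => hmust α _ ⟨t', ht', rfl⟩, fun α s' hs' => ?_⟩
    obtain ⟨_, ⟨t', ht', rfl⟩, hsat⟩ := hmay α s' hs'
    exact ⟨t', ht', hsat⟩
  · rintro ⟨hmust, hmay⟩
    refine ⟨fun α r ⟨t', ht', hr⟩ => hr ▸ hmust α t' ht', fun α s' hs' => ?_⟩
    obtain ⟨t', ht', hsat⟩ := hmay α s' hs'
    exact ⟨_, ⟨t', ht', rfl⟩, hsat⟩

theorem sat_c_charForm_approx (hM : M.IsModal) (hMf : M.ImageFinite) (n : ℕ) (t : σ) :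
    Sat M (charForm (M.approx hMf n t)) .c t := by
  induction n generalizing t with
  | zero => simp [approx, charForm, Sat]
  | succ n ih =>
    rw [sat_charForm_approx_succ M hM]
    exact ⟨fun α t' ht' => ⟨t', hM _ _ _ ht', ih t'⟩, fun α s' hs' => ⟨s', hM _ _ _ hs', ih s'⟩⟩

theorem refinesUpTo_of_sat_a_charForm_approx (hM : M.IsModal) (hMf : M.ImageFinite) (n : ℕ)
    {t u : σ} (hu : Sat M (charForm (M.approx hMf n t)) .a u) : M.RefinesUpTo M n t u := by
  induction n generalizing t u with
  | zero => trivial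
  | succ n ih =>
    rw [sat_charForm_approx_succ M hM] at hu
    obtain ⟨hmust, hmay⟩ := hu
    refine fun α => ⟨fun t' ht' => ?_, fun u' hu' => ?_⟩
    · obtain ⟨u', hu', hsat⟩ := hmust α t' ht'
      exact ⟨u', hu', ih hsat⟩
    · obtain ⟨t', ht', hsat⟩ := hmay α u' hu'
      exact ⟨t', ht', ih hsat⟩

end MTS

section Main

variable {Act σ : Type} [Fintype Act] [DecidableEq Act] (M : MTS Act σ)

theorem sat_a_dia_charForm_of_sat_psiForm {i t : σ} (ht : M.ReachC i t) {α : Act} {p : MPA Act}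
    (hψ : ∀ w, Sat M (psiForm w α p) .a i) (hc : Sat M (.dia α (charForm p)) .c t) :
    Sat M (.dia α (charForm p)) .a t := by
  obtain ⟨w, hw⟩ := ht.exists_boxes
  rcases (sat_orf M _ _ _ _).1 (hw _ (hψ w)) with ha | hna
  · exact ha
  · exact absurd hc hna

theorem sat_a_of_sat_c_of_reachC (hM : M.IsModal) (hMf : M.ImageFinite) {i : σ}
    (hdec : ∀ t, M.ReachC i t → ∀ α (p : MPA Act),
      Sat M (.dia α (charForm p)) .c t → Sat M (.dia α (charForm p)) .a t)
    (φ : HML Act) {t : σ} (ht : M.ReachC i t) : Sat M φ .c t → Sat M φ .a t := by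
  induction φ generalizing t with
  | tt => exact id
  | neg φ ih => exact fun hc ha => hc (ih ht ha)
  | dia α φ ih =>
    rintro ⟨s', hs', hφ⟩
    set p := M.approx hMf φ.depth s'
    obtain ⟨u, hu, hup⟩ := hdec t ht α p ⟨s', hs', M.sat_c_charForm_approx hM hMf _ s'⟩
    have hs'u := M.refinesUpTo_of_sat_a_charForm_approx hM hMf _ hup
    exact ⟨u, hu, (hs'u.sat φ le_rfl).1 (ih (ht.tail ⟨α, hs'⟩) hφ)⟩
  | and φ ψ ihφ ihψ => exact fun hc => ⟨ihφ ht hc.1, ihψ ht hc.2⟩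

end Main

/-- If the image-finite pointed modal transition system `(M,i)`
satisfies every formula of `Φ` in mode `a`, then for every HML formula `φ`,
`(M,i) ⊨ᶜ φ` implies `(M,i) ⊨ᵃ φ`. -/
theorem sat_c_implies_sat_a_of_psiForms {Act σ : Type} [Fintype Act] [DecidableEq Act]
    (M : MTS Act σ) (hM : M.IsModal) (hMf : M.ImageFinite) (i : σ)
    (h : ∀ (w : List Act) (α : Act) (p : MPA Act), Sat M (psiForm w α p) .a i)
    (φ : HML Act) : Sat M φ .c i → Sat M φ .a i :=
  sat_a_of_sat_c_of_reachC M hM hMf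
    (fun _ ht _ _ => sat_a_dia_charForm_of_sat_psiForm M ht fun w => h w _ _) φ .refl
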